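/- Let λ > 1/2, α > 0, 0 < β < α, δ > 0, and set γ = √(α² − β²). Then δβK_{λ+1}(δγ)/(γK_λ(δγ)) > (β/γ²)·[λ + 1/2 + √((λ − 1/2)² + δ²γ²)]. Equality holds if λ = 1/2 and the inequality is reversed for λ < 1/2. -/

import Mathlib

/-!
Write `K_ν(x) = ½ ∫_ℝ exp (ν t - x cosh t) dt`. By the recurrence
`x (K_{ν+1} - K_{ν-1}) = 2ν K_ν`, with `s = √((ν - ½)² + x²)` and `E = x K_{ν-1} + (ν - ½) K_ν`,
the difference `x K_{ν+1} - (ν + ½ + s) K_ν` equals `E - s K_ν`, while `E + s K_ν > 0` and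
`(E - s K_ν)(E + s K_ν) = x D`, where `D = x (K_{ν+1} K_{ν-1} - K_ν²) - K_ν K_{ν-1}`.
So everything hinges on the sign of this Turán-type expression. The product formula
`K_a K_b = ∫ exp ((a + b) p) K_{a-b}(2x cosh p) dp` (the substitution `(p + q, p - q)` in the
product of the two integrals) and the recurrence at order 1 give
`D = ∫ exp ((2ν - 1) p) tanh p K_1(2x cosh p) dp`; the weight `tanh p K_1(2x cosh p)` is odd and
positive on `(0, ∞)`, so `D` has the sign of `2ν - 1`.
-/

open Real MeasureTheory

/-- Modified Bessel function of the second kind. -/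
noncomputable def besselK (ν x : ℝ) : ℝ :=
  ∫ t in Set.Ioi (0:ℝ), Real.exp (-x * Real.cosh t) * Real.cosh (ν * t)

open Filter Set

lemma one_add_sq_div_two_le_cosh (t : ℝ) : 1 + t ^ 2 / 2 ≤ cosh t := by
  have hsinh : (t / 2) ^ 2 ≤ sinh (t / 2) ^ 2 :=
    sq_le_sq.2 (by rw [abs_sinh]; exact self_le_sinh_iff.2 (abs_nonneg _))
  have hcosh := cosh_two_mul (t / 2)
  rw [show 2 * (t / 2) = t by ring, cosh_sq] at hcosh
  nlinarith

lemma integrable_exp_neg_mul_sq_add_mul {b : ℝ} (hb : 0 < b) (c : ℝ) :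
    Integrable fun t : ℝ => exp (-b * t ^ 2 + c * t) := by
  have hsq : (fun t : ℝ => exp (-b * t ^ 2 + c * t)) =
      fun t => exp (c ^ 2 / (4 * b)) * exp (-b * (t - c / (2 * b)) ^ 2) := by
    funext t; rw [← exp_add]; congr 1; field_simp; ring
  rw [hsq]
  exact ((integrable_exp_neg_mul_sq hb).comp_sub_right (c / (2 * b))).const_mul _

lemma integrable_exp_mul_sub_mul_cosh {x : ℝ} (hx : 0 < x) (a : ℝ) :
    Integrable fun t : ℝ => exp (a * t - x * cosh t) := by
  refine ((integrable_exp_neg_mul_sq_add_mul (half_pos hx) a).const_mul (exp (-x))).mono'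
    (by fun_prop : Continuous _).aestronglyMeasurable (Eventually.of_forall fun t => ?_)
  rw [norm_of_nonneg (exp_pos _).le, ← exp_add, exp_le_exp]
  nlinarith [one_add_sq_div_two_le_cosh t]

section Parity

variable {h : ℝ → ℝ} {m : ℝ}

lemma integral_exp_neg_mul_mul (m : ℝ) (h : ℝ → ℝ) :
    ∫ t, exp (-m * t) * h t = ∫ t, exp (m * t) * h (-t) := by
  rw [← integral_neg_eq_self]
  simp only [neg_mul_neg]

lemma integral_exp_mul_of_even (heven : ∀ t, h (-t) = h t)
    (hi : Integrable fun t => exp (m * t) * h t) :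
    ∫ t, exp (m * t) * h t = ∫ t, cosh (m * t) * h t := by
  have hi' : Integrable fun t => exp (-m * t) * h t := by
    simpa [heven, mul_neg] using hi.comp_neg
  have hrefl : ∫ t, exp (-m * t) * h t = ∫ t, exp (m * t) * h t := by
    simp only [integral_exp_neg_mul_mul, heven]
  have hpt : (fun t => cosh (m * t) * h t) =
      fun t => (exp (m * t) * h t + exp (-m * t) * h t) / 2 := by
    funext t; rw [cosh_eq, neg_mul]; ring
  rw [hpt, integral_div, integral_add hi hi', hrefl]
  ring

lemma integrable_sinh_mul_of_odd (hodd : ∀ t, h (-t) = -h t)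
    (hi : Integrable fun t => exp (m * t) * h t) :
    Integrable fun t => sinh (m * t) * h t := by
  have hi' : Integrable fun t => exp (-m * t) * h t := by
    simpa [hodd, mul_neg] using hi.comp_neg.neg
  refine ((hi.sub hi').div_const 2).congr (Eventually.of_forall fun t => ?_)
  simp only [Pi.sub_apply, sinh_eq, neg_mul]
  ring

lemma integral_exp_mul_of_odd (hodd : ∀ t, h (-t) = -h t)
    (hi : Integrable fun t => exp (m * t) * h t) :
    ∫ t, exp (m * t) * h t = ∫ t, sinh (m * t) * h t := by
  have hi' : Integrable fun t => exp (-m * t) * h t := by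
    simpa [hodd, mul_neg] using hi.comp_neg.neg
  have hrefl : ∫ t, exp (-m * t) * h t = -∫ t, exp (m * t) * h t := by
    simp only [integral_exp_neg_mul_mul, hodd, mul_neg, integral_neg]
  have hpt : (fun t => sinh (m * t) * h t) =
      fun t => (exp (m * t) * h t - exp (-m * t) * h t) / 2 := by
    funext t; rw [sinh_eq, neg_mul]; ring
  rw [hpt, integral_div, integral_sub hi hi', hrefl]
  ring

lemma integral_sinh_mul_pos (hodd : ∀ t, h (-t) = -h t) (hpos : ∀ t, 0 < t → 0 < h t)
    (hm : 0 < m) (hi : Integrable fun t => sinh (m * t) * h t) :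
    0 < ∫ t, sinh (m * t) * h t := by
  have hprod : ∀ t, t ≠ 0 → 0 < sinh (m * t) * h t := by
    intro t ht
    rcases ht.lt_or_gt with ht | ht
    · have hneg := hpos (-t) (neg_pos.2 ht)
      rw [hodd] at hneg
      exact mul_pos_of_neg_of_neg (sinh_neg_iff.2 (mul_neg_of_pos_of_neg hm ht)) (by linarith)
    · exact mul_pos (sinh_pos_iff.2 (mul_pos hm ht)) (hpos t ht)
  have hnonneg : 0 ≤ fun t => sinh (m * t) * h t := fun t => by
    rcases eq_or_ne t 0 with rfl | ht
    · simp
    · exact (hprod t ht).le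
  rw [integral_pos_iff_support_of_nonneg hnonneg hi]
  refine lt_of_lt_of_le ?_ (measure_mono (s := Ioi 0) fun t ht => (hprod t (ne_of_gt ht)).ne')
  simp

lemma sign_integral_exp_mul_of_odd (hodd : ∀ t, h (-t) = -h t) (hpos : ∀ t, 0 < t → 0 < h t)
    (hi : Integrable fun t => exp (m * t) * h t) :
    SignType.sign (∫ t, exp (m * t) * h t) = SignType.sign m := by
  rw [integral_exp_mul_of_odd hodd hi]
  have hsinh := integrable_sinh_mul_of_odd hodd hi
  rcases lt_trichotomy m 0 with hm | rfl | hm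
  · have hneg : ∫ t, sinh (m * t) * h t = -∫ t, sinh (-m * t) * h t := by
      rw [← integral_neg]; simp only [neg_mul, sinh_neg, neg_neg]
    rw [hneg, sign_neg (neg_neg_of_pos (integral_sinh_mul_pos hodd hpos (neg_pos.2 hm)
      (by simp only [neg_mul, sinh_neg]; exact hsinh.neg))), sign_neg hm]
  · simp
  · rw [sign_pos (integral_sinh_mul_pos hodd hpos hm hsinh), sign_pos hm]

end Parity

noncomputable def sumDiffEquiv : (ℝ × ℝ) ≃ₗ[ℝ] (ℝ × ℝ) where
  toFun z := (z.1 + z.2, z.1 - z.2)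
  invFun w := ((w.1 + w.2) / 2, (w.1 - w.2) / 2)
  map_add' _ _ := by ext <;> simp <;> ring
  map_smul' _ _ := by ext <;> simp [mul_add, mul_sub]
  left_inv _ := by ext <;> simp
  right_inv _ := by ext <;> simp <;> ring

lemma det_sumDiffEquiv : LinearMap.det (sumDiffEquiv : (ℝ × ℝ) →ₗ[ℝ] (ℝ × ℝ)) = -2 := by
  rw [← LinearMap.det_toMatrix (Module.Basis.finTwoProd ℝ), Matrix.det_fin_two]
  simp [LinearMap.toMatrix_apply, sumDiffEquiv]
  norm_num

lemma map_sumDiffEquiv_volume :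
    Measure.map sumDiffEquiv (volume.prod volume) = ENNReal.ofReal 2⁻¹ • volume.prod volume := by
  rw [← Measure.volume_eq_prod, show ((sumDiffEquiv : (ℝ × ℝ) ≃ₗ[ℝ] (ℝ × ℝ)) : ℝ × ℝ → ℝ × ℝ)
      = ((sumDiffEquiv : (ℝ × ℝ) →ₗ[ℝ] (ℝ × ℝ)) : ℝ × ℝ → ℝ × ℝ) from rfl,
    Measure.map_linearMap_addHaar_eq_smul_addHaar _ (by rw [det_sumDiffEquiv]; norm_num),
    det_sumDiffEquiv]
  norm_num

lemma integral_mul_integral_eq_two_mul_integral_add_mul_sub {f g : ℝ → ℝ} (hf : Integrable f)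
    (hg : Integrable g) :
    (∫ s, f s) * (∫ t, g t) = 2 * ∫ p, ∫ q, f (p + q) * g (p - q) := by
  set F : ℝ × ℝ → ℝ := fun z => f z.1 * g z.2
  have hemb : MeasurableEmbedding sumDiffEquiv :=
    sumDiffEquiv.toContinuousLinearEquiv.toHomeomorph.measurableEmbedding
  have hFL : Integrable (F ∘ sumDiffEquiv) (volume.prod volume) := by
    rw [← hemb.integrable_map_iff, map_sumDiffEquiv_volume]
    exact (hf.mul_prod hg).smul_measure ENNReal.ofReal_ne_top
  have hmap := hemb.integral_map (μ := volume.prod volume) F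
  rw [map_sumDiffEquiv_volume, integral_smul_measure, ENNReal.toReal_ofReal (by norm_num),
    smul_eq_mul] at hmap
  calc (∫ s, f s) * (∫ t, g t) = ∫ z, F z ∂(volume.prod volume) := (integral_prod_mul f g).symm
    _ = 2 * ∫ z, F (sumDiffEquiv z) ∂(volume.prod volume) := by rw [← hmap]; ring
    _ = 2 * ∫ p, ∫ q, f (p + q) * g (p - q) := congrArg (2 * ·) (integral_prod _ hFL)

section BesselK

variable {x : ℝ}

lemma besselK_eq_integral (hx : 0 < x) (ν : ℝ) :
    besselK ν x = (∫ t, exp (ν * t - x * cosh t)) / 2 := by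
  have hi : Integrable fun t => exp (ν * t) * exp (-x * cosh t) := by
    simpa only [← exp_add, neg_mul, ← sub_eq_add_neg] using integrable_exp_mul_sub_mul_cosh hx ν
  have habs : ∀ t, exp (-x * cosh |t|) * cosh (ν * |t|) = cosh (ν * t) * exp (-x * cosh t) := by
    intro t
    rcases abs_cases t with ⟨ht, -⟩ | ⟨ht, -⟩ <;> simp [ht, mul_comm]
  have hfull : (∫ t, exp (ν * t - x * cosh t)) = ∫ t, exp (ν * t) * exp (-x * cosh t) := by
    simp only [← exp_add, neg_mul, ← sub_eq_add_neg]
  rw [hfull, integral_exp_mul_of_even (fun t => by rw [cosh_neg]) hi, ← funext habs,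
    integral_comp_abs (f := fun t => exp (-x * cosh t) * cosh (ν * t)), besselK]
  ring

lemma besselK_pos (hx : 0 < x) (ν : ℝ) : 0 < besselK ν x := by
  rw [besselK_eq_integral hx]
  refine div_pos ?_ two_pos
  rw [integral_pos_iff_support_of_nonneg (fun t => (exp_pos _).le)
    (integrable_exp_mul_sub_mul_cosh hx ν)]
  simp [Function.support, (exp_pos _).ne']

lemma stronglyMeasurable_besselK (ν : ℝ) : StronglyMeasurable (besselK ν) :=
  StronglyMeasurable.integral_prod_right'
    (f := fun z : ℝ × ℝ => exp (-z.1 * cosh z.2) * cosh (ν * z.2))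
    (by fun_prop : Continuous _).stronglyMeasurable

lemma besselK_le_exp_mul_besselK {y : ℝ} (hx : 0 < x) (hxy : x ≤ y) (ν : ℝ) :
    besselK ν y ≤ exp (x - y) * besselK ν x := by
  rw [besselK_eq_integral hx, besselK_eq_integral (hx.trans_le hxy), mul_div_assoc',
    ← integral_const_mul]
  gcongr ?_ / 2
  refine integral_mono (integrable_exp_mul_sub_mul_cosh (hx.trans_le hxy) ν)
    ((integrable_exp_mul_sub_mul_cosh hx ν).const_mul _) fun t => ?_
  rw [← exp_add, exp_le_exp]
  nlinarith [one_le_cosh t]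

lemma integrable_exp_mul_mul_besselK_mul_cosh (hx : 0 < x) (c ν : ℝ) :
    Integrable fun p => exp (c * p) * besselK ν (2 * x * cosh p) := by
  have hmeas : AEStronglyMeasurable (fun p => exp (c * p) * besselK ν (2 * x * cosh p)) :=
    (by fun_prop : Continuous fun p => exp (c * p)).aestronglyMeasurable.mul
      ((stronglyMeasurable_besselK ν).comp_measurable (by fun_prop)).aestronglyMeasurable
  refine ((integrable_exp_mul_sub_mul_cosh (mul_pos two_pos hx) c).const_mul
    (exp x * besselK ν x)).mono' hmeas (Eventually.of_forall fun p => ?_)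
  have hle := besselK_le_exp_mul_besselK hx (by nlinarith [one_le_cosh p] : x ≤ 2 * x * cosh p) ν
  rw [norm_of_nonneg (mul_pos (exp_pos _) (besselK_pos (by positivity) ν)).le]
  calc exp (c * p) * besselK ν (2 * x * cosh p)
      ≤ exp (c * p) * (exp (x - 2 * x * cosh p) * besselK ν x) := by gcongr
    _ = exp x * besselK ν x * exp (c * p - 2 * x * cosh p) := by
      rw [exp_sub, exp_sub]; ring

lemma besselK_add_one_sub_besselK_sub_one (hx : 0 < x) (ν : ℝ) :
    x * (besselK (ν + 1) x - besselK (ν - 1) x) = 2 * ν * besselK ν x := by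
  set f : ℝ → ℝ → ℝ := fun a t => exp (a * t - x * cosh t) with hf
  have hderiv : ∀ t,
      HasDerivAt (f ν) (ν * f ν t - x / 2 * f (ν + 1) t + x / 2 * f (ν - 1) t) t := by
    intro t
    refine (((hasDerivAt_id t).const_mul ν).sub
      ((hasDerivAt_cosh t).const_mul x)).exp.congr_deriv ?_
    simp only [hf, id, sinh_eq, Pi.sub_apply]
    rw [show (ν + 1) * t - x * cosh t = ν * t - x * cosh t + t by ring,
      show (ν - 1) * t - x * cosh t = ν * t - x * cosh t + -t by ring, exp_add, exp_add]
    ring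
  have hint : ∀ a, Integrable (f a) := integrable_exp_mul_sub_mul_cosh hx
  have h1 : Integrable fun t => ν * f ν t := (hint ν).const_mul ν
  have h2 : Integrable fun t => x / 2 * f (ν + 1) t := (hint _).const_mul _
  have h3 : Integrable fun t => x / 2 * f (ν - 1) t := (hint _).const_mul _
  have hzero := integral_eq_zero_of_hasDerivAt_of_integrable hderiv ((h1.sub h2).add h3) (hint ν)
  rw [integral_add (f := fun t => ν * f ν t - x / 2 * f (ν + 1) t) (h1.sub h2) h3,
    integral_sub h1 h2, integral_const_mul, integral_const_mul, integral_const_mul] at hzero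
  simp only [besselK_eq_integral hx, hf] at hzero ⊢
  linarith

lemma besselK_mul_besselK (hx : 0 < x) (a b : ℝ) :
    besselK a x * besselK b x = ∫ p, exp ((a + b) * p) * besselK (a - b) (2 * x * cosh p) := by
  have hinner : ∀ p,
      (∫ q, exp (a * (p + q) - x * cosh (p + q)) * exp (b * (p - q) - x * cosh (p - q)))
      = exp ((a + b) * p) * (2 * besselK (a - b) (2 * x * cosh p)) := by
    intro p
    rw [besselK_eq_integral (by positivity), mul_div_cancel₀ _ two_ne_zero, ← integral_const_mul]
    congr 1 with q
    rw [← exp_add, ← exp_add, cosh_add, cosh_sub]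
    ring_nf
  rw [besselK_eq_integral hx, besselK_eq_integral hx, div_mul_div_comm,
    integral_mul_integral_eq_two_mul_integral_add_mul_sub (integrable_exp_mul_sub_mul_cosh hx a)
      (integrable_exp_mul_sub_mul_cosh hx b), funext hinner]
  simp only [mul_left_comm _ (2 : ℝ), integral_const_mul]
  ring

end BesselK

section Turan

variable {x : ℝ}

lemma besselK_turan_identity (hx : 0 < x) (ν : ℝ) :
    x * (besselK (ν + 1) x * besselK (ν - 1) x - besselK ν x ^ 2)
        - besselK ν x * besselK (ν - 1) x
      = ∫ p, exp ((2 * ν - 1) * p) * (tanh p * besselK 1 (2 * x * cosh p)) := by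
  have hrec : ∀ p, 2 * x * cosh p * (besselK 2 (2 * x * cosh p) - besselK 0 (2 * x * cosh p))
      = 2 * besselK 1 (2 * x * cosh p) := fun p => by
    simpa [one_add_one_eq_two] using besselK_add_one_sub_besselK_sub_one (x := 2 * x * cosh p)
      (by positivity) 1
  have hint := integrable_exp_mul_mul_besselK_mul_cosh hx
  have hdiff : Integrable fun p => x * (exp (2 * ν * p) * besselK 2 (2 * x * cosh p)
      - exp (2 * ν * p) * besselK 0 (2 * x * cosh p)) :=
    ((hint _ _).sub (hint _ _)).const_mul x
  rw [sq, besselK_mul_besselK hx, besselK_mul_besselK hx, besselK_mul_besselK hx,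
    show ν + 1 + (ν - 1) = 2 * ν by ring, show ν + 1 - (ν - 1) = 2 by ring,
    show ν + ν = 2 * ν by ring, show ν - ν = 0 by ring,
    show ν + (ν - 1) = 2 * ν - 1 by ring, show ν - (ν - 1) = 1 by ring,
    ← integral_sub (hint _ _) (hint _ _), ← integral_const_mul,
    ← integral_sub hdiff (hint _ _)]
  congr 1 with p
  have hexp : exp (2 * ν * p) = exp ((2 * ν - 1) * p) * (cosh p + sinh p) := by
    rw [cosh_add_sinh, ← exp_add]; ring_nf
  have hrec_p := hrec p
  rw [tanh_eq_sinh_div_cosh, hexp]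
  generalize besselK 0 (2 * x * cosh p) = K₀ at hrec_p ⊢
  generalize besselK 1 (2 * x * cosh p) = K₁ at hrec_p ⊢
  generalize besselK 2 (2 * x * cosh p) = K₂ at hrec_p ⊢
  field_simp
  linear_combination (cosh p + sinh p) / 2 * hrec_p

lemma sign_besselK_turan (hx : 0 < x) (ν : ℝ) :
    SignType.sign (x * (besselK (ν + 1) x * besselK (ν - 1) x - besselK ν x ^ 2)
        - besselK ν x * besselK (ν - 1) x) = SignType.sign (2 * ν - 1) := by
  have hmeas : Measurable tanh := by
    simp_rw [funext tanh_eq_sinh_div_cosh]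
    fun_prop
  have hint :
      Integrable fun p => exp ((2 * ν - 1) * p) * (tanh p * besselK 1 (2 * x * cosh p)) := by
    refine (integrable_exp_mul_mul_besselK_mul_cosh hx (2 * ν - 1) 1).mono'
      ((by fun_prop : Continuous fun p => exp ((2 * ν - 1) * p)).aestronglyMeasurable.mul
        (hmeas.aestronglyMeasurable.mul
          ((stronglyMeasurable_besselK 1).comp_measurable (by fun_prop)).aestronglyMeasurable))
      (Eventually.of_forall fun p => ?_)
    have hK := besselK_pos (x := 2 * x * cosh p) (by positivity) 1
    rw [norm_mul, norm_mul, norm_of_nonneg (exp_pos _).le, norm_of_nonneg hK.le]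
    gcongr
    exact mul_le_of_le_one_left hK.le (abs_tanh_lt_one p).le
  rw [besselK_turan_identity hx]
  refine sign_integral_exp_mul_of_odd (fun p => ?_) (fun p hp => ?_) hint
  · rw [tanh_neg, cosh_neg, neg_mul]
  · exact mul_pos (by rw [tanh_eq_sinh_div_cosh]; exact div_pos (sinh_pos_iff.2 hp) (cosh_pos p))
      (besselK_pos (by positivity) 1)

lemma sign_mul_besselK_add_one_sub (hx : 0 < x) (ν : ℝ) :
    SignType.sign (x * besselK (ν + 1) x
      - (ν + 1 / 2 + √((ν - 1 / 2) ^ 2 + x ^ 2)) * besselK ν x) = SignType.sign (ν - 1 / 2) := by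
  set s := √((ν - 1 / 2) ^ 2 + x ^ 2)
  have hs : s ^ 2 = (ν - 1 / 2) ^ 2 + x ^ 2 := sq_sqrt (by positivity)
  have hs_ge : |ν - 1 / 2| ≤ s := abs_le_sqrt (by nlinarith)
  have hK := besselK_pos hx ν
  have hsum : 0 < x * besselK (ν - 1) x + (ν - 1 / 2) * besselK ν x + s * besselK ν x := by
    nlinarith [neg_abs_le (ν - 1 / 2), besselK_pos hx (ν - 1)]
  have hfactor : (x * besselK (ν + 1) x - (ν + 1 / 2 + s) * besselK ν x)
        * (x * besselK (ν - 1) x + (ν - 1 / 2) * besselK ν x + s * besselK ν x)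
      = x * (x * (besselK (ν + 1) x * besselK (ν - 1) x - besselK ν x ^ 2)
        - besselK ν x * besselK (ν - 1) x) := by
    linear_combination ((ν - 1 / 2 + s) * besselK ν x) * besselK_add_one_sub_besselK_sub_one hx ν
      - besselK ν x ^ 2 * hs
  have hsign := congrArg SignType.sign hfactor
  rw [sign_mul, sign_mul, sign_pos hsum, sign_pos hx, sign_besselK_turan hx, mul_one, one_mul,
    show 2 * ν - 1 = 2 * (ν - 1 / 2) by ring, sign_mul, sign_pos two_pos, one_mul] at hsign
  exact hsign

end Turan

lemma gt_eq_lt_of_sign_sub_eq_sign_sub {a b c d : ℝ}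
    (h : SignType.sign (a - b) = SignType.sign (c - d)) :
    (d < c → a > b) ∧ (c = d → a = b) ∧ (c < d → a < b) := by
  refine ⟨fun hdc => ?_, fun hcd => ?_, fun hcd => ?_⟩
  · rwa [sign_pos (sub_pos.2 hdc), sign_eq_one_iff, sub_pos] at h
  · simpa [hcd, sub_eq_zero] using h
  · rwa [sign_neg (sub_neg.2 hcd), sign_eq_neg_one_iff, sub_neg] at h

theorem stmt_7_general (lam α β δ γ : ℝ) (hβ : 0 < β) (hβα : β < α) (hδ : 0 < δ)
    (hγ : γ = Real.sqrt (α ^ 2 - β ^ 2)) :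
    (1 / 2 < lam → δ * β * besselK (lam + 1) (δ * γ) / (γ * besselK lam (δ * γ)) >
      β / γ ^ 2 * (lam + 1 / 2 + Real.sqrt ((lam - 1 / 2) ^ 2 + δ ^ 2 * γ ^ 2))) ∧
    (lam = 1 / 2 → δ * β * besselK (lam + 1) (δ * γ) / (γ * besselK lam (δ * γ)) =
      β / γ ^ 2 * (lam + 1 / 2 + Real.sqrt ((lam - 1 / 2) ^ 2 + δ ^ 2 * γ ^ 2))) ∧
    (lam < 1 / 2 → δ * β * besselK (lam + 1) (δ * γ) / (γ * besselK lam (δ * γ)) <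
      β / γ ^ 2 * (lam + 1 / 2 + Real.sqrt ((lam - 1 / 2) ^ 2 + δ ^ 2 * γ ^ 2))) := by
  have hγ₀ : 0 < γ := hγ ▸ sqrt_pos.2 (by nlinarith)
  have hx : 0 < δ * γ := mul_pos hδ hγ₀
  have hK := besselK_pos hx lam
  have hc : 0 < β / (γ ^ 2 * besselK lam (δ * γ)) := by positivity
  apply gt_eq_lt_of_sign_sub_eq_sign_sub
  rw [← sign_mul_besselK_add_one_sub hx lam, ← one_mul (SignType.sign (_ - _ * besselK lam _)),
    ← sign_pos hc, ← sign_mul]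
  congr 1
  field_simp

theorem stmt_7 (lam α β δ γ : ℝ) (hα : 0 < α) (hβ : 0 < β) (hβα : β < α) (hδ : 0 < δ)
    (hγ : γ = Real.sqrt (α ^ 2 - β ^ 2)) :
    (1 / 2 < lam → δ * β * besselK (lam + 1) (δ * γ) / (γ * besselK lam (δ * γ)) >
      β / γ ^ 2 * (lam + 1 / 2 + Real.sqrt ((lam - 1 / 2) ^ 2 + δ ^ 2 * γ ^ 2))) ∧
    (lam = 1 / 2 → δ * β * besselK (lam + 1) (δ * γ) / (γ * besselK lam (δ * γ)) =
      β / γ ^ 2 * (lam + 1 / 2 + Real.sqrt ((lam - 1 / 2) ^ 2 + δ ^ 2 * γ ^ 2))) ∧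
    (lam < 1 / 2 → δ * β * besselK (lam + 1) (δ * γ) / (γ * besselK lam (δ * γ)) <
      β / γ ^ 2 * (lam + 1 / 2 + Real.sqrt ((lam - 1 / 2) ^ 2 + δ ^ 2 * γ ^ 2))) :=
  stmt_7_general lam α β δ γ hβ hβα hδ hγ
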